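/- For every natural number m, and for any p₀ > 1 large enough that θ_m is positive and continuous on [p₀, ∞), one has ∫_{p₀}^∞ dp / (p θ_m(p)) = ∞, and consequently θ_m is an admissible function. -/

import Mathlib

/-!
For large `p`, `1 / (p θ_m(p))` is the derivative of `ln^{m+1} p`, which tends to infinity, so the
first integral diverges. For admissibility, substitute `s = e^{-q}` and take `ε = 1/q` in the
infimum: then `s^{1-ε} = e·s`, so `β_{M,φ}(e^{-q}) ≤ e·max(1, M)·e^{-q}·q θ_m(q)`, and the
substituted integrand dominates a constant multiple of `1 / (q θ_m(q))`.
-/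

open Set Filter Topology MeasureTheory

theorem hasDerivAt_iterate_log {n : ℕ} {p : ℝ} (hp : ∀ k < n, Real.log^[k] p ≠ 0) :
    HasDerivAt Real.log^[n] (∏ k ∈ Finset.range n, Real.log^[k] p)⁻¹ p := by
  induction n with
  | zero => simpa using hasDerivAt_id p
  | succ n ih =>
    have hlog := (Real.hasDerivAt_log (hp n n.lt_succ_self)).comp p
      (ih fun k hk => hp k (hk.trans n.lt_succ_self))
    rw [← Function.iterate_succ'] at hlog
    rwa [Finset.prod_range_succ, mul_inv, mul_comm]

theorem tendsto_iterate_log_atTop (n : ℕ) : Tendsto Real.log^[n] atTop atTop := by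
  induction n with
  | zero => exact tendsto_id
  | succ n ih => simpa only [Function.iterate_succ'] using Real.tendsto_log_atTop.comp ih

theorem eventually_one_le_iterate_log (n : ℕ) : ∀ᶠ p in atTop, ∀ k ≤ n, 1 ≤ Real.log^[k] p := by
  simpa only [Finset.mem_range, Nat.lt_succ_iff] using (Finset.range (n + 1)).eventually_all.2
    fun k _ => (tendsto_iterate_log_atTop k).eventually_ge_atTop 1

theorem prod_range_succ_iterate_log (m : ℕ) (p : ℝ) :
    ∏ k ∈ Finset.range (m + 1), Real.log^[k] p = p * ∏ k ∈ Finset.Icc 1 m, Real.log^[k] p := by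
  rw [Finset.prod_range_succ', Function.iterate_zero_apply, mul_comm,
    ← Finset.Ico_add_one_right_eq_Icc, Finset.prod_Ico_eq_prod_range]
  simp [add_comm]

theorem lintegral_Ioi_eq_top_of_hasDerivAt_of_tendsto {f f' : ℝ → ℝ} {a : ℝ}
    (hderiv : ∀ x ∈ Ioi a, HasDerivAt f (f' x) x) (hf'_nonneg : ∀ x ∈ Ioi a, 0 ≤ f' x)
    (hf : Tendsto f atTop atTop) :
    ∫⁻ x in Ioi a, ENNReal.ofReal (f' x) = ⊤ := by
  by_contra hfin
  have hmeas : AEStronglyMeasurable f' (volume.restrict (Ioi a)) :=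
    (measurable_deriv f).aestronglyMeasurable.congr <|
      (ae_restrict_mem measurableSet_Ioi).mono fun x hx => (hderiv x hx).deriv
  have hint : IntegrableOn f' (Ioi a) :=
    (lintegral_ofReal_ne_top_iff_integrable hmeas
      ((ae_restrict_mem measurableSet_Ioi).mono hf'_nonneg)).1 hfin
  exact not_tendsto_nhds_of_tendsto_atTop hf _
    (tendsto_limUnder_of_hasDerivAt_of_integrableOn_Ioi hderiv hint)

theorem exists_pos_le_of_continuousOn_Ici {f : ℝ → ℝ} {a : ℝ} (hf : ContinuousOn f (Ici a))
    (hpos : ∀ x ≥ a, 0 < f x) (htop : Tendsto f atTop atTop) :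
    ∃ c > 0, ∀ x ≥ a, c ≤ f x := by
  obtain ⟨b, hb⟩ := eventually_atTop.1 (htop.eventually_ge_atTop (f a))
  obtain ⟨x₀, hx₀, hmin⟩ := isCompact_Icc.exists_isMinOn (nonempty_Icc.2 (le_max_left a b))
    (hf.mono Icc_subset_Ici_self)
  refine ⟨f x₀, hpos x₀ hx₀.1, fun x hx => ?_⟩
  rcases le_total x (max a b) with hxb | hxb
  · exact hmin ⟨hx, hxb⟩
  · exact (hmin (left_mem_Icc.2 (le_max_left a b))).trans (hb x ((le_max_right a b).trans hxb))

theorem tendsto_mul_prod_iterate_log_atTop (m : ℕ) :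
    Tendsto (fun p => p * ∏ k ∈ Finset.Icc 1 m, Real.log^[k] p) atTop atTop := by
  refine tendsto_atTop_mono' _ ?_ tendsto_id
  filter_upwards [eventually_one_le_iterate_log m, eventually_ge_atTop 0] with p hlog hp
  exact le_mul_of_one_le_right hp (Finset.one_le_prod fun k hk => hlog k (Finset.mem_Icc.1 hk).2)

theorem lintegral_Ioi_inv_mul_prod_iterate_log_eq_top (m : ℕ) (a : ℝ) :
    ∫⁻ p in Ioi a, ENNReal.ofReal (1 / (p * ∏ k ∈ Finset.Icc 1 m, Real.log^[k] p)) = ⊤ := by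
  obtain ⟨P, hP⟩ := eventually_atTop.1 (eventually_one_le_iterate_log m)
  have hlog : ∀ p ∈ Ioi (max a P), ∀ k < m + 1, 1 ≤ Real.log^[k] p := fun p hp k hk =>
    hP p ((le_max_right a P).trans hp.le) k (Nat.lt_succ_iff.1 hk)
  simp_rw [one_div, ← prod_range_succ_iterate_log]
  refine eq_top_iff.2 (le_of_eq_of_le ?_ (lintegral_mono_set (Ioi_subset_Ioi (le_max_left a P))))
  refine (lintegral_Ioi_eq_top_of_hasDerivAt_of_tendsto (f := Real.log^[m + 1])
    (fun p hp => hasDerivAt_iterate_log fun k hk => (one_pos.trans_le (hlog p hp k hk)).ne')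
    (fun p hp => ?_) (tendsto_iterate_log_atTop _)).symm
  exact inv_nonneg.2 (zero_le_one.trans (Finset.one_le_prod fun k hk =>
    hlog p hp k (Finset.mem_range.1 hk)))

theorem lintegral_Ioi_exp_neg_mul_comp_le (g : ℝ → ENNReal) {a : ℝ} (ha : 0 ≤ a) :
    ∫⁻ q in Ioi a, ENNReal.ofReal (Real.exp (-q)) * g (Real.exp (-q)) ≤ ∫⁻ s in Ioo 0 1, g s := by
  have hsubst := lintegral_image_eq_lintegral_abs_deriv_mul (measurableSet_Ioi (a := a))
    (fun q _ => (hasDerivAt_neg q).exp.hasDerivWithinAt)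
    (Real.exp_injective.comp neg_injective).injOn g
  simp only [mul_neg_one, abs_neg, abs_of_pos (Real.exp_pos _)] at hsubst
  rw [← hsubst]
  refine lintegral_mono_set ?_
  rintro _ ⟨q, hq, rfl⟩
  exact ⟨Real.exp_pos _, Real.exp_lt_one_iff.2 (neg_lt_zero.2 (ha.trans_lt hq))⟩

/-- The paper's `β_{M,φ}`. As `1 / 0 = 0`, integrating `1 / betaInf` needs `betaInf_pos`. -/
noncomputable def betaInf (M p₀ : ℝ) (φ : ℝ → ℝ) (s : ℝ) : ℝ :=
  sInf ((fun ε => M ^ ε * s ^ (1 - ε) * φ (1 / ε)) '' Ioc 0 (1 / p₀))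

section betaInf

variable {M p₀ s : ℝ} {φ : ℝ → ℝ}

theorem le_one_div_of_mem_Ioc {ε : ℝ} (hp₀ : 0 < p₀) (hε : ε ∈ Ioc 0 (1 / p₀)) : p₀ ≤ 1 / ε :=
  (le_one_div hp₀ hε.1).2 hε.2

theorem betaInf_le {ε : ℝ} (hM : 0 < M) (hs : 0 ≤ s) (hp₀ : 0 < p₀) (hφ : ∀ p ≥ p₀, 0 ≤ φ p)
    (hε : ε ∈ Ioc 0 (1 / p₀)) : betaInf M p₀ φ s ≤ M ^ ε * s ^ (1 - ε) * φ (1 / ε) := by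
  refine csInf_le ⟨0, ?_⟩ (mem_image_of_mem _ hε)
  rintro _ ⟨δ, hδ, rfl⟩
  have := hφ _ (le_one_div_of_mem_Ioc hp₀ hδ)
  positivity

theorem betaInf_pos {c : ℝ} (hM : 0 < M) (hs : 0 < s) (hs₁ : s ≤ 1) (hp₀ : 0 < p₀) (hc : 0 < c)
    (hφ : ∀ p ≥ p₀, c ≤ φ p) : 0 < betaInf M p₀ φ s := by
  have hMε : ∀ ε ∈ Ioc 0 (1 / p₀), min 1 (M ^ (1 / p₀)) ≤ M ^ ε := fun ε hε => by
    rcases le_total 1 M with h | h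
    · exact (min_le_left _ _).trans (Real.one_le_rpow h hε.1.le)
    · exact (min_le_right _ _).trans (Real.rpow_le_rpow_of_exponent_ge hM h hε.2)
  have hsε : ∀ ε ∈ Ioc 0 (1 / p₀), s ≤ s ^ (1 - ε) := fun ε hε => by
    simpa using Real.rpow_le_rpow_of_exponent_ge hs hs₁ (sub_le_self 1 hε.1.le)
  have hlb : ∀ x ∈ (fun ε => M ^ ε * s ^ (1 - ε) * φ (1 / ε)) '' Ioc 0 (1 / p₀),
      min 1 (M ^ (1 / p₀)) * s * c ≤ x := by
    rintro _ ⟨ε, hε, rfl⟩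
    dsimp only
    gcongr
    · exact hMε ε hε
    · exact hsε ε hε
    · exact hφ _ (le_one_div_of_mem_Ioc hp₀ hε)
  exact (by positivity : 0 < min 1 (M ^ (1 / p₀)) * s * c).trans_le
    (le_csInf ⟨_, mem_image_of_mem _ ⟨one_div_pos.2 hp₀, le_rfl⟩⟩ hlb)

theorem betaInf_exp_neg_le {q : ℝ} (hM : 0 < M) (hp₀ : 1 ≤ p₀) (hφ : ∀ p ≥ p₀, 0 ≤ φ p)
    (hq : p₀ ≤ q) :
    betaInf M p₀ φ (Real.exp (-q)) ≤ Real.exp 1 * max 1 M * Real.exp (-q) * φ q := by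
  have hq₀ : 0 < q := zero_lt_one.trans_le (hp₀.trans hq)
  have hMq : M ^ (1 / q) ≤ max 1 M :=
    (Real.rpow_le_rpow hM.le (le_max_right 1 M) (by positivity)).trans
      (Real.rpow_le_self_of_one_le (le_max_left 1 M) ((div_le_one hq₀).2 (hp₀.trans hq)))
  calc betaInf M p₀ φ (Real.exp (-q))
      ≤ M ^ (1 / q) * Real.exp (-q) ^ (1 - 1 / q) * φ (1 / (1 / q)) :=
        betaInf_le hM (Real.exp_pos _).le (zero_lt_one.trans_le hp₀) hφ
          ⟨by positivity, one_div_le_one_div_of_le (zero_lt_one.trans_le hp₀) hq⟩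
    _ = M ^ (1 / q) * Real.exp 1 * Real.exp (-q) * φ q := by
        have hexp : Real.exp (-q) ^ (1 - 1 / q) = Real.exp 1 * Real.exp (-q) := by
          rw [← Real.exp_mul, ← Real.exp_add]
          congr 1
          field_simp
          ring
        rw [hexp, one_div_one_div]
        ring
    _ ≤ Real.exp 1 * max 1 M * Real.exp (-q) * φ q := by
        have := hφ q hq
        rw [mul_comm (M ^ _)]
        gcongr

theorem inv_mul_one_div_le_exp_neg_mul_one_div_betaInf {c q : ℝ} (hM : 0 < M) (hp₀ : 1 ≤ p₀)
    (hc : 0 < c) (hφ : ∀ p ≥ p₀, c ≤ φ p) (hq : p₀ ≤ q) :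
    (Real.exp 1 * max 1 M)⁻¹ * (1 / φ q) ≤
      Real.exp (-q) * (1 / betaInf M p₀ φ (Real.exp (-q))) := by
  have hβ := betaInf_pos hM (Real.exp_pos (-q))
    (Real.exp_le_one_iff.2 (by linarith)) (zero_lt_one.trans_le hp₀) hc hφ
  calc (Real.exp 1 * max 1 M)⁻¹ * (1 / φ q)
      = Real.exp (-q) / (Real.exp 1 * max 1 M * Real.exp (-q) * φ q) := by
        have := Real.exp_pos (-q)
        have : 0 < max 1 M := zero_lt_one.trans_le (le_max_left 1 M)
        field_simp
    _ ≤ Real.exp (-q) / betaInf M p₀ φ (Real.exp (-q)) :=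
        div_le_div_of_nonneg_left (Real.exp_pos _).le hβ
          (betaInf_exp_neg_le hM hp₀ (fun p hp => hc.le.trans (hφ p hp)) hq)
    _ = Real.exp (-q) * (1 / betaInf M p₀ φ (Real.exp (-q))) := (mul_one_div _ _).symm

end betaInf

/-- For every natural `m`, with `θ_m(p) = (ln p)(ln ln p)⋯(lnᵐ p)` (and `θ_0 = 1`), and any
`p₀ > 1` large enough that `θ_m` is positive and continuous on `[p₀, ∞)`, one has
`∫_{p₀}^∞ dp/(p θ_m(p)) = ∞`, and consequently `θ_m` is admissible:
`∫₀¹ ds / β_{M,φ}(s) = ∞` for every `M > 0`, where `φ(p) = p θ_m(p)`. -/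
theorem stmt_6 (m : ℕ) (p₀ : ℝ) (hp₀ : 1 < p₀)
    (θ : ℝ → ℝ) (hθ : ∀ p, θ p = ∏ k ∈ Finset.Icc 1 m, Real.log^[k] p)
    (hθc : ContinuousOn θ (Ici p₀)) (hθpos : ∀ p ≥ p₀, 0 < θ p) :
    (∫⁻ p in Ioi p₀, ENNReal.ofReal (1 / (p * θ p)) = ⊤) ∧
    ∀ M > 0, ∫⁻ s in Ioo (0:ℝ) 1, ENNReal.ofReal
      (1 / sInf ((fun ε => M ^ ε * s ^ (1 - ε) * ((1 / ε) * θ (1 / ε))) '' Ioc 0 (1 / p₀)))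
      = ⊤ := by
  obtain rfl : θ = fun p => ∏ k ∈ Finset.Icc 1 m, Real.log^[k] p := funext hθ
  have hdiv := lintegral_Ioi_inv_mul_prod_iterate_log_eq_top m p₀
  refine ⟨hdiv, fun M hM => ?_⟩
  obtain ⟨c, hc, hφc⟩ := exists_pos_le_of_continuousOn_Ici ((continuousOn_id' _).mul hθc)
    (fun p hp => mul_pos (by linarith [hp.le]) (hθpos p hp)) (tendsto_mul_prod_iterate_log_atTop m)
  set K := Real.exp 1 * max 1 M
  have hK : ENNReal.ofReal K⁻¹ ≠ 0 := ENNReal.ofReal_ne_zero_iff.2 (by positivity)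
  refine eq_top_iff.2 (le_trans ?_ (lintegral_Ioi_exp_neg_mul_comp_le _ (by linarith : 0 ≤ p₀)))
  calc ⊤ = ∫⁻ q in Ioi p₀, ENNReal.ofReal K⁻¹ *
        ENNReal.ofReal (1 / (q * ∏ k ∈ Finset.Icc 1 m, Real.log^[k] q)) := by
        rw [lintegral_const_mul' _ _ ENNReal.ofReal_ne_top, hdiv, ENNReal.mul_top hK]
    _ ≤ _ := setLIntegral_mono' measurableSet_Ioi fun q hq => by
        rw [← ENNReal.ofReal_mul (by positivity), ← ENNReal.ofReal_mul (Real.exp_pos _).le]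
        exact ENNReal.ofReal_le_ofReal
          (inv_mul_one_div_le_exp_neg_mul_one_div_betaInf hM hp₀.le hc hφc hq.le)
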